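/- Let (A, r) be a pair of a cocommutative bialgebra A over K and r ∈ A^{⊗2} with (Δ⊗id)(r) = r^{13} + r^{23}, (id⊗Δ)(r) = r^{12} + r^{13}, CYB(r) = 0, and [r + r^{21}, Δ(x)] = 0 for all x. Then δ(x) := [r, Δ(x)] defines a co-Poisson structure on A, making A a co-Poisson cocommutative bialgebra. -/

import Mathlib

/-
With `X = (Δ ⊗ id) Δ x`, the hypothesis on `(Δ ⊗ id) r` gives
`(δ ⊗ id) δ x = ⁅r^{12}, ⁅r^{13} + r^{23}, X⁆⁆`. Cocommutativity makes `X` invariant under permuting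
tensor legs, so the co-Jacobi sum is a cyclic sum of double commutators, which vanishes by the
Jacobi identity, CYB and the `Δ`-invariance of `r + r^{21}` (transported to the legs `ij` of `X`).
Antisymmetry is the invariance of `r + r^{21}` itself, and the compatibility and derivation rules
are commutator identities.
-/

open TensorProduct

noncomputable section

variable (K : Type*) [Field K] [CharZero K]
variable (A : Type*) [Ring A] [Bialgebra K A]

/-- `x ⊗ y ↦ x ⊗ y ⊗ 1`. -/
def e12 : A ⊗[K] A →ₗ[K] A ⊗[K] (A ⊗[K] A) :=
  TensorProduct.map LinearMap.id ((TensorProduct.mk K A A).flip 1)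

/-- `t ↦ 1 ⊗ t`. -/
def e23 : A ⊗[K] A →ₗ[K] A ⊗[K] (A ⊗[K] A) :=
  TensorProduct.mk K A (A ⊗[K] A) 1

/-- `x ⊗ y ↦ x ⊗ 1 ⊗ y`. -/
def e13 : A ⊗[K] A →ₗ[K] A ⊗[K] (A ⊗[K] A) :=
  (TensorProduct.map LinearMap.id (TensorProduct.comm K A A).toLinearMap) ∘ₗ e12 K A

/-- The flip of `A ⊗ A`. -/
def tau : A ⊗[K] A →ₗ[K] A ⊗[K] A := (TensorProduct.comm K A A).toLinearMap

/-- Swap of the first two factors of `A ⊗ A ⊗ A`. -/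
def s12 : A ⊗[K] (A ⊗[K] A) →ₗ[K] A ⊗[K] (A ⊗[K] A) :=
  (TensorProduct.assoc K A A A).toLinearMap ∘ₗ
    (TensorProduct.map (TensorProduct.comm K A A).toLinearMap LinearMap.id) ∘ₗ
      (TensorProduct.assoc K A A A).symm.toLinearMap

/-- Swap of the last two factors of `A ⊗ A ⊗ A`. -/
def s23 : A ⊗[K] (A ⊗[K] A) →ₗ[K] A ⊗[K] (A ⊗[K] A) :=
  TensorProduct.map LinearMap.id (TensorProduct.comm K A A).toLinearMap

/-- `Δ ⊗ id`. -/
def D1 : A ⊗[K] A →ₗ[K] A ⊗[K] (A ⊗[K] A) :=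
  (TensorProduct.assoc K A A A).toLinearMap ∘ₗ TensorProduct.map Coalgebra.comul LinearMap.id

/-- `id ⊗ Δ`. -/
def D2 : A ⊗[K] A →ₗ[K] A ⊗[K] (A ⊗[K] A) :=
  TensorProduct.map LinearMap.id Coalgebra.comul

/-- `δ(x) = [r, Δ(x)]` as a linear map. -/
def delta (r : A ⊗[K] A) : A →ₗ[K] A ⊗[K] A :=
  (LinearMap.mulLeft K r - LinearMap.mulRight K r) ∘ₗ
    (Coalgebra.comul : A →ₗ[K] A ⊗[K] A)

theorem Ring.lie_mul {R : Type*} [Ring R] (a b c : R) :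
    ⁅a, b * c⁆ = ⁅a, b⁆ * c + b * ⁅a, c⁆ := by
  simp only [Ring.lie_def]
  noncomm_ring

/- Read `rᵢⱼ` as `r^{ij}` and `tᵢⱼ` as `(r^{21})^{ij}`. Modulo the centralizer of `X` we have
`tᵢⱼ ≡ -rᵢⱼ`, and Jacobi turns the sum into `⁅⁅r13 + t13, r12 - r23⁆, X⁆ + ⁅CYB(r), X⁆`. -/
theorem lie_lie_cyclic_sum_eq_zero {L : Type*} [LieRing L] (X r12 r13 r23 t12 t13 t23 : L)
    (h12 : ⁅r12 + t12, X⁆ = 0) (h13 : ⁅r13 + t13, X⁆ = 0) (h23 : ⁅r23 + t23, X⁆ = 0)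
    (hD : ⁅r13 + t13, r12 + t23⁆ = 0)
    (hY : ⁅r12, r13⁆ + ⁅r12, r23⁆ + ⁅r13, r23⁆ = 0) :
    ⁅r12, ⁅r13 + r23, X⁆⁆ + ⁅r23, ⁅t12 + t13, X⁆⁆ + ⁅t13, ⁅t23 + r12, X⁆⁆ = 0 := by
  rw [add_lie, add_eq_zero_iff_eq_neg'] at h12 h13 h23
  have hD' := congrArg (⁅·, X⁆) hD
  have hY' := congrArg (⁅·, X⁆) hY
  simp only [lie_lie, add_lie, lie_add, lie_neg, zero_lie, h12, h13, h23] at hD' hY' ⊢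
  linear_combination (norm := abel) hD' + hY'

section

variable {K A}
omit [CharZero K]

attribute [local instance] LieRing.ofAssociativeRing

theorem delta_apply (r : A ⊗[K] A) (x : A) : delta K A r x = ⁅r, Coalgebra.comul x⁆ := rfl

theorem tau_lie (u v : A ⊗[K] A) : tau K A ⁅u, v⁆ = ⁅tau K A u, tau K A v⁆ :=
  (Algebra.TensorProduct.comm K A A).toAlgHom.toLieHom.map_lie u v

theorem s12_lie (u v : A ⊗[K] (A ⊗[K] A)) : s12 K A ⁅u, v⁆ = ⁅s12 K A u, s12 K A v⁆ :=
  ((Algebra.TensorProduct.assoc K K K A A A).toAlgHom.comp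
    ((Algebra.TensorProduct.map (Algebra.TensorProduct.comm K A A).toAlgHom (AlgHom.id K A)).comp
      (Algebra.TensorProduct.assoc K K K A A A).symm.toAlgHom)).toLieHom.map_lie u v

theorem s23_lie (u v : A ⊗[K] (A ⊗[K] A)) : s23 K A ⁅u, v⁆ = ⁅s23 K A u, s23 K A v⁆ :=
  (Algebra.TensorProduct.map (AlgHom.id K A)
    (Algebra.TensorProduct.comm K A A).toAlgHom).toLieHom.map_lie u v

theorem D1_lie (u v : A ⊗[K] A) : D1 K A ⁅u, v⁆ = ⁅D1 K A u, D1 K A v⁆ :=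
  ((Algebra.TensorProduct.assoc K K K A A A).toAlgHom.comp
    (Algebra.TensorProduct.map (Bialgebra.comulAlgHom K A) (AlgHom.id K A))).toLieHom.map_lie u v

theorem D1_comul (x : A) : D1 K A (Coalgebra.comul x) = D2 K A (Coalgebra.comul x) :=
  congr($(Coalgebra.coassoc (R := K) (A := A)) x)

theorem e12_eq_assoc (v : A ⊗[K] A) :
    e12 K A v = TensorProduct.assoc K A A A (v ⊗ₜ 1) := by
  induction v using TensorProduct.induction_on with
  | zero => simp
  | tmul a b => rfl
  | add x y hx hy => rw [map_add, hx, hy, add_tmul, map_add]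

theorem s23_e12 (v : A ⊗[K] A) : s23 K A (e12 K A v) = e13 K A v := rfl

theorem s23_e13 (v : A ⊗[K] A) : s23 K A (e13 K A v) = e12 K A v := by
  induction v using TensorProduct.induction_on with
  | zero => simp
  | tmul a b => rfl
  | add x y hx hy => rw [map_add, map_add, hx, hy, map_add]

theorem s23_e23 (v : A ⊗[K] A) : s23 K A (e23 K A v) = e23 K A (tau K A v) := rfl

theorem s12_e12 (v : A ⊗[K] A) : s12 K A (e12 K A v) = e12 K A (tau K A v) := by
  induction v using TensorProduct.induction_on with
  | zero => simp
  | tmul a b => rfl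
  | add x y hx hy => rw [map_add, map_add, hx, hy, map_add, map_add]

theorem s12_e13 (v : A ⊗[K] A) : s12 K A (e13 K A v) = e23 K A v := by
  induction v using TensorProduct.induction_on with
  | zero => simp
  | tmul a b => rfl
  | add x y hx hy => rw [map_add, map_add, hx, hy, map_add]

theorem s12_e23 (v : A ⊗[K] A) : s12 K A (e23 K A v) = e13 K A v := by
  induction v using TensorProduct.induction_on with
  | zero => simp
  | tmul a b => rfl
  | add x y hx hy => rw [map_add, map_add, hx, hy, map_add]

theorem commute_e12_D1 {v : A ⊗[K] A} (hv : ∀ y : A, Commute v (Coalgebra.comul y))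
    (w : A ⊗[K] A) : Commute (e12 K A v) (D1 K A w) := by
  have h : Commute (v ⊗ₜ[K] (1 : A))
      (TensorProduct.map (Coalgebra.comul (R := K)) (LinearMap.id : A →ₗ[K] A) w) := by
    induction w using TensorProduct.induction_on with
    | zero => exact Commute.zero_right _
    | tmul a b => exact (hv a).tmul (Commute.one_left b)
    | add x y hx hy => rw [map_add]; exact hx.add_right hy
  rw [e12_eq_assoc]
  exact h.map (Algebra.TensorProduct.assoc K K K A A A)

theorem commute_e23_D2 {v : A ⊗[K] A} (hv : ∀ y : A, Commute v (Coalgebra.comul y))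
    (w : A ⊗[K] A) : Commute (e23 K A v) (D2 K A w) := by
  induction w using TensorProduct.induction_on with
  | zero => exact Commute.zero_right _
  | tmul a b => exact (Commute.one_left a).tmul (hv b)
  | add x y hx hy => rw [map_add]; exact hx.add_right hy

theorem map_delta_id (r w : A ⊗[K] A) :
    TensorProduct.map (delta K A r) LinearMap.id w =
      ⁅r ⊗ₜ[K] (1 : A), TensorProduct.map (Coalgebra.comul (R := K)) LinearMap.id w⁆ := by
  induction w using TensorProduct.induction_on with
  | zero => simp
  | tmul a b =>
    simp only [map_tmul, LinearMap.id_apply, delta_apply, Ring.lie_def,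
      Algebra.TensorProduct.tmul_mul_tmul, one_mul, mul_one, sub_tmul]
  | add x y hx hy => rw [map_add, map_add, hx, hy, lie_add]

theorem assoc_map_delta_id (r w : A ⊗[K] A) :
    TensorProduct.assoc K A A A (TensorProduct.map (delta K A r) LinearMap.id w) =
      ⁅e12 K A r, D1 K A w⁆ := by
  rw [map_delta_id, e12_eq_assoc]
  exact (Algebra.TensorProduct.assoc K K K A A A).toAlgHom.toLieHom.map_lie _ _

theorem map_id_delta (r w : A ⊗[K] A) :
    TensorProduct.map LinearMap.id (delta K A r) w = ⁅e23 K A r, D2 K A w⁆ := by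
  induction w using TensorProduct.induction_on with
  | zero => simp
  | tmul a b =>
    simp only [map_tmul, LinearMap.id_apply, delta_apply, e23, D2, TensorProduct.mk_apply,
      Ring.lie_def, Algebra.TensorProduct.tmul_mul_tmul, one_mul, mul_one, tmul_sub]
  | add x y hx hy => rw [map_add, map_add, hx, hy, lie_add]

theorem delta_mul (r : A ⊗[K] A) (a b : A) :
    delta K A r (a * b) =
      delta K A r a * Coalgebra.comul b + Coalgebra.comul a * delta K A r b := by
  simp only [delta_apply, Bialgebra.comul_mul, Ring.lie_mul]

variable (hcc : ∀ a : A, tau K A (Coalgebra.comul a) = Coalgebra.comul a)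
include hcc

theorem s12_D1 (w : A ⊗[K] A) : s12 K A (D1 K A w) = D1 K A w := by
  induction w using TensorProduct.induction_on with
  | zero => simp
  | tmul a b =>
    simp only [D1, s12, LinearMap.comp_apply, LinearEquiv.coe_coe, LinearEquiv.symm_apply_apply,
      map_tmul]
    exact congrArg (fun c => TensorProduct.assoc K A A A (c ⊗ₜ b)) (hcc a)
  | add x y hx hy => rw [map_add, map_add, hx, hy]

theorem s23_D2 (w : A ⊗[K] A) : s23 K A (D2 K A w) = D2 K A w := by
  induction w using TensorProduct.induction_on with
  | zero => simp
  | tmul a b => exact congrArg (a ⊗ₜ ·) (hcc b)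
  | add x y hx hy => rw [map_add, map_add, hx, hy]

theorem delta_add_tau_delta {r : A ⊗[K] A}
    (hinvt : ∀ x : A, Commute (r + tau K A r) (Coalgebra.comul x)) (x : A) :
    delta K A r x + tau K A (delta K A r x) = 0 := by
  rw [delta_apply, tau_lie, hcc, ← add_lie]
  exact (hinvt x).lie_eq

theorem D1_delta {r : A ⊗[K] A} (hr1 : D1 K A r = e13 K A r + e23 K A r) (x : A) :
    D1 K A (delta K A r x) =
      (TensorProduct.map LinearMap.id (delta K A r)) (Coalgebra.comul x) +
        (s12 K A) ((TensorProduct.map LinearMap.id (delta K A r)) (Coalgebra.comul x)) := by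
  rw [map_id_delta, ← D1_comul, s12_lie, s12_e23, s12_D1 hcc, delta_apply, D1_lie, hr1, add_lie,
    add_comm]

theorem delta_coJacobi {r : A ⊗[K] A} (hr1 : D1 K A r = e13 K A r + e23 K A r)
    (hcyb : (e12 K A r * e13 K A r - e13 K A r * e12 K A r) +
        (e12 K A r * e23 K A r - e23 K A r * e12 K A r) +
        (e13 K A r * e23 K A r - e23 K A r * e13 K A r) = 0)
    (hinvt : ∀ x : A, Commute (r + tau K A r) (Coalgebra.comul x)) (x : A) :
    (((TensorProduct.assoc K A A A).toLinearMap ∘ₗ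
        TensorProduct.map (delta K A r) LinearMap.id) (delta K A r x)) +
      (s12 K A) ((s23 K A) (((TensorProduct.assoc K A A A).toLinearMap ∘ₗ
        TensorProduct.map (delta K A r) LinearMap.id) (delta K A r x))) +
      (s23 K A) ((s12 K A) (((TensorProduct.assoc K A A A).toLinearMap ∘ₗ
        TensorProduct.map (delta K A r) LinearMap.id) (delta K A r x))) = 0 := by
  set X := D1 K A (Coalgebra.comul x) with hX
  have hX12 : s12 K A X = X := s12_D1 hcc _
  have hX23 : s23 K A X = X := by rw [hX, D1_comul, s23_D2 hcc]
  have h12 : ⁅e12 K A r + e12 K A (tau K A r), X⁆ = 0 := by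
    rw [← map_add]
    exact (commute_e12_D1 hinvt _).lie_eq
  have h13 : ⁅e13 K A r + e13 K A (tau K A r), X⁆ = 0 := by
    have := congrArg (s23 K A) h12
    rwa [s23_lie, map_add, s23_e12, s23_e12, hX23, map_zero] at this
  have h23 : ⁅e23 K A r + e23 K A (tau K A r), X⁆ = 0 := by
    rw [← map_add, hX, D1_comul]
    exact (commute_e23_D2 hinvt _).lie_eq
  have hD : ⁅e13 K A r + e13 K A (tau K A r), e12 K A r + e23 K A (tau K A r)⁆ = 0 := by
    have := congrArg (s23 K A) (commute_e12_D1 hinvt r).lie_eq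
    rwa [s23_lie, hr1, map_add, map_add, map_add, s23_e12, s23_e12, s23_e13, s23_e23,
      map_zero] at this
  have hterm : TensorProduct.assoc K A A A (TensorProduct.map (delta K A r) LinearMap.id
      (delta K A r x)) = ⁅e12 K A r, ⁅e13 K A r + e23 K A r, X⁆⁆ := by
    rw [assoc_map_delta_id, delta_apply, D1_lie, hr1]
  simp only [LinearMap.comp_apply, LinearEquiv.coe_coe, hterm, s12_lie, s23_lie, map_add, s23_e12,
    s23_e13, s23_e23, s12_e12, s12_e13, s12_e23, hX12, hX23]
  exact lie_lie_cyclic_sum_eq_zero X _ _ _ _ _ _ h12 h13 h23 hD hcyb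

end

theorem stmt11
    (hcc : ∀ a : A, tau K A (Coalgebra.comul a) = Coalgebra.comul a)
    (r : A ⊗[K] A)
    (hr1 : D1 K A r = e13 K A r + e23 K A r)
    (hcyb : (e12 K A r * e13 K A r - e13 K A r * e12 K A r) +
        (e12 K A r * e23 K A r - e23 K A r * e12 K A r) +
        (e13 K A r * e23 K A r - e23 K A r * e13 K A r) = 0)
    (hinvt : ∀ x : A, (r + tau K A r) * Coalgebra.comul x =
      Coalgebra.comul x * (r + tau K A r)) :
    -- antisymmetry
    (∀ x : A, delta K A r x + tau K A (delta K A r x) = 0) ∧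
    -- co-Jacobi
    (∀ x : A,
      (((TensorProduct.assoc K A A A).toLinearMap ∘ₗ
          TensorProduct.map (delta K A r) LinearMap.id) (delta K A r x)) +
        (s12 K A) ((s23 K A) (((TensorProduct.assoc K A A A).toLinearMap ∘ₗ
          TensorProduct.map (delta K A r) LinearMap.id) (delta K A r x))) +
        (s23 K A) ((s12 K A) (((TensorProduct.assoc K A A A).toLinearMap ∘ₗ
          TensorProduct.map (delta K A r) LinearMap.id) (delta K A r x))) = 0) ∧
    -- compatibility (Δ⊗id)∘δ = ((123)+(213))∘(id⊗δ)∘Δ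
    (∀ x : A,
      D1 K A (delta K A r x) =
        (TensorProduct.map LinearMap.id (delta K A r)) (Coalgebra.comul x) +
          (s12 K A) ((TensorProduct.map LinearMap.id (delta K A r)) (Coalgebra.comul x))) ∧
    -- derivation property
    (∀ a b : A, delta K A r (a * b) =
      delta K A r a * Coalgebra.comul b + Coalgebra.comul a * delta K A r b) :=
  ⟨delta_add_tau_delta hcc hinvt, delta_coJacobi hcc hr1 hcyb hinvt, D1_delta hcc hr1,
    delta_mul r⟩

end
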